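/- arXiv:2502.06176 — 2 statements merged into one kernel-verified Lean document; each statement's English description precedes it below -/
import Mathlib

section
/- Fix λ > 0 and z ∈ K. Let (z_n) be a sequence in K with z_n → z in norm, for each n let f_n ∈ C be a minimizer of J_{λ,z_n} over C, and let f ∈ C be the minimizer of J_{λ,z} over C. Then f_n converges strongly to f in H, i.e., ‖f_n − f‖ → 0. -/
/-!
The Tikhonov functional is `λ`-strongly convex, so a minimizer `f` over a convex set grows
quadratically away from it: `J_z g - J_z f ≥ (λ/4) ‖g - f‖²` for `g ∈ C` (compare `J_z` at `g`, `f`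
and their midpoint). Adding this for the minimizers of `J_z` and `J_{z'}`, the difference
`J_{z'} - J_z` is affine in the argument with slope `⟪A ·, z - z'⟫`, which yields
`λ ‖f' - f‖ ≤ 2 ‖A‖ ‖z' - z‖`: the minimizer depends Lipschitz-continuously on the data.
-/

open Filter

section Tikhonov

variable {H K : Type*} [NormedAddCommGroup H] [InnerProductSpace ℝ H]
  [NormedAddCommGroup K] [InnerProductSpace ℝ K]

lemma norm_half_smul_add_sq (x y : H) :
    ‖(1 / 2 : ℝ) • (x + y)‖ ^ 2 = (‖x‖ ^ 2 + ‖y‖ ^ 2) / 2 - ‖x - y‖ ^ 2 / 4 := by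
  have parallelogram := parallelogram_law_with_norm ℝ x y
  rw [norm_smul, Real.norm_eq_abs, abs_of_pos one_half_pos]
  linarith

noncomputable def tikhonov (A : H →L[ℝ] K) (lam : ℝ) (z : K) (f : H) : ℝ :=
  1 / 2 * ‖A f - z‖ ^ 2 + lam / 2 * ‖f‖ ^ 2

variable (A : H →L[ℝ] K) (lam : ℝ)

lemma tikhonov_half_smul_add (z : K) (g f : H) :
    tikhonov A lam z ((1 / 2 : ℝ) • (g + f)) =
      (tikhonov A lam z g + tikhonov A lam z f) / 2 - (‖A (g - f)‖ ^ 2 + lam * ‖g - f‖ ^ 2) / 8 := by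
  have hA : A ((1 / 2 : ℝ) • (g + f)) - z = (1 / 2 : ℝ) • ((A g - z) + (A f - z)) := by
    simp only [map_smul, map_add]
    module
  have hsub : (A g - z) - (A f - z) = A (g - f) := by rw [map_sub]; abel
  simp only [tikhonov, hA, norm_half_smul_add_sq, hsub]
  ring

variable {A lam}

lemma IsMinOn.tikhonov_quadratic_growth {C : Set H} (hC : Convex ℝ C) {z : K} {f g : H}
    (hf : IsMinOn (tikhonov A lam z) C f) (hfC : f ∈ C) (hgC : g ∈ C) :
    lam / 4 * ‖g - f‖ ^ 2 ≤ tikhonov A lam z g - tikhonov A lam z f := by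
  have hmid : (1 / 2 : ℝ) • (g + f) ∈ C := by
    rw [smul_add]
    exact hC hgC hfC (by norm_num) (by norm_num) (by norm_num)
  have hmin := isMinOn_iff.1 hf _ hmid
  rw [tikhonov_half_smul_add] at hmin
  nlinarith [sq_nonneg ‖A (g - f)‖]

variable (A lam)

lemma tikhonov_sub_tikhonov_sub_eq_inner (z z' : K) (f g : H) :
    (tikhonov A lam z' f - tikhonov A lam z f) - (tikhonov A lam z' g - tikhonov A lam z g) =
      inner ℝ (A (g - f)) (z' - z) := by
  simp only [tikhonov, norm_sub_sq_real, map_sub, inner_sub_left, inner_sub_right]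
  ring

variable {A lam}

lemma IsMinOn.tikhonov_lipschitz {C : Set H} (hC : Convex ℝ C) {z z' : K} {f f' : H}
    (hf : IsMinOn (tikhonov A lam z) C f) (hfC : f ∈ C)
    (hf' : IsMinOn (tikhonov A lam z') C f') (hf'C : f' ∈ C) :
    lam * ‖f' - f‖ ≤ 2 * ‖A‖ * ‖z' - z‖ := by
  have growth := hf.tikhonov_quadratic_growth hC hfC hf'C
  have growth' := hf'.tikhonov_quadratic_growth hC hf'C hfC
  have hinner : inner ℝ (A (f' - f)) (z' - z) ≤ ‖A‖ * ‖f' - f‖ * ‖z' - z‖ :=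
    (real_inner_le_norm _ _).trans
      (mul_le_mul_of_nonneg_right (A.le_opNorm _) (norm_nonneg _))
  have key : lam * ‖f' - f‖ ^ 2 ≤ 2 * ‖A‖ * ‖z' - z‖ * ‖f' - f‖ := by
    rw [norm_sub_rev f f'] at growth'
    linarith [tikhonov_sub_tikhonov_sub_eq_inner A lam z z' f f']
  rcases (norm_nonneg (f' - f)).eq_or_lt with h0 | hpos
  · rw [← h0, mul_zero]
    positivity
  · exact le_of_mul_le_mul_right (by nlinarith) hpos

end Tikhonov

theorem tikhonov_stability_general
    {H K : Type*} [NormedAddCommGroup H] [InnerProductSpace ℝ H]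
    [NormedAddCommGroup K] [InnerProductSpace ℝ K]
    (A : H →L[ℝ] K) (C : Set H)
    (hCconv : Convex ℝ C) (lam : ℝ) (hlam : 0 < lam) (z : K)
    (zn : ℕ → K) (hzn : Tendsto zn atTop (nhds z))
    (fn : ℕ → H) (hfnC : ∀ n, fn n ∈ C)
    (hfn : ∀ n, ∀ g ∈ C,
      (1 / 2) * ‖A (fn n) - zn n‖ ^ 2 + (lam / 2) * ‖fn n‖ ^ 2 ≤
        (1 / 2) * ‖A g - zn n‖ ^ 2 + (lam / 2) * ‖g‖ ^ 2)
    (f : H) (hfC : f ∈ C)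
    (hf : ∀ g ∈ C,
      (1 / 2) * ‖A f - z‖ ^ 2 + (lam / 2) * ‖f‖ ^ 2 ≤
        (1 / 2) * ‖A g - z‖ ^ 2 + (lam / 2) * ‖g‖ ^ 2) :
    Tendsto fn atTop (nhds f) := by
  have bound : ∀ n, ‖fn n - f‖ ≤ 2 * ‖A‖ / lam * ‖zn n - z‖ := fun n => by
    rw [div_mul_eq_mul_div, le_div_iff₀' hlam]
    exact IsMinOn.tikhonov_lipschitz hCconv (isMinOn_iff.2 hf) hfC (isMinOn_iff.2 (hfn n)) (hfnC n)
  have hdata : Tendsto (fun n => ‖zn n - z‖) atTop (nhds 0) :=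
    tendsto_iff_norm_sub_tendsto_zero.1 hzn
  refine tendsto_iff_norm_sub_tendsto_zero.2 (squeeze_zero (fun n => norm_nonneg _) bound ?_)
  simpa using hdata.const_mul (2 * ‖A‖ / lam)

/-- Stability of the Tikhonov-regularized solutions: if `z_n → z` and `f_n` is a minimizer
of `J_{lam, z_n}` over `C` while `f` is the minimizer of `J_{lam, z}` over `C`,
then `f_n → f` strongly in `H`. -/
theorem tikhonov_stability
    {H K : Type*} [NormedAddCommGroup H] [InnerProductSpace ℝ H] [CompleteSpace H]
    [NormedAddCommGroup K] [InnerProductSpace ℝ K] [CompleteSpace K]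
    (A : H →L[ℝ] K) (C : Set H) (hCne : C.Nonempty) (hCcl : IsClosed C)
    (hCconv : Convex ℝ C) (lam : ℝ) (hlam : 0 < lam) (z : K)
    (zn : ℕ → K) (hzn : Tendsto zn atTop (nhds z))
    (fn : ℕ → H) (hfnC : ∀ n, fn n ∈ C)
    (hfn : ∀ n, ∀ g ∈ C,
      (1 / 2) * ‖A (fn n) - zn n‖ ^ 2 + (lam / 2) * ‖fn n‖ ^ 2 ≤
        (1 / 2) * ‖A g - zn n‖ ^ 2 + (lam / 2) * ‖g‖ ^ 2)
    (f : H) (hfC : f ∈ C)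
    (hf : ∀ g ∈ C,
      (1 / 2) * ‖A f - z‖ ^ 2 + (lam / 2) * ‖f‖ ^ 2 ≤
        (1 / 2) * ‖A g - z‖ ^ 2 + (lam / 2) * ‖g‖ ^ 2) :
    Tendsto fn atTop (nhds f) :=
  tikhonov_stability_general A C hCconv lam hlam z zn hzn fn hfnC hfn f hfC hf
end

section
/- Let f₊ ∈ C and z ∈ K satisfy A f₊ = z, and assume the source condition: there exists ζ ∈ K such that f₊ is the metric projection of A*ζ onto C, i.e., ‖f₊ − A*ζ‖ ≤ ‖g − A*ζ‖ for all g ∈ C. Let ε ≥ 0, let z^ε ∈ K satisfy ‖z^ε − z‖ ≤ ε, let λ > 0, and let f ∈ C be the minimizer over C of J_{λ,z^ε}(g) = (1/2)‖A g − z^ε‖² + (λ/2)‖g‖². Then ‖f₊ − f‖ ≤ √λ·‖ζ‖ + ε/√λ. -/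
/-! The source condition says that `f₊` is the projection of `A† ζ` onto `C`, so the variational
inequality of the projection gives `⟪f₊, f - f₊⟫ ≥ ⟪(A†) ζ, f - f₊⟫ = ⟪ζ, A f - z⟫`. Inserting this
into the expansion of `‖f - f₊‖²` and comparing the Tikhonov functional at `f` and at `f₊` yields
`lam ‖f - f₊‖² ≤ ε² + 2 lam ‖ζ‖ (t + ε) - t²` with `t = ‖A f - z^ε‖`; maximizing over `t`
gives `lam ‖f - f₊‖² ≤ (ε + lam ‖ζ‖)²`. -/

open scoped InnerProduct RealInnerProductSpace

section NearestPoint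

variable {F : Type*} [NormedAddCommGroup F] [InnerProductSpace ℝ F]

theorem real_inner_sub_le_zero_of_forall_norm_sub_le {C : Set F} (hC : Convex ℝ C) {x u : F}
    (hx : x ∈ C) (hmin : ∀ g ∈ C, ‖x - u‖ ≤ ‖g - u‖) :
    ∀ g ∈ C, ⟪u - x, g - x⟫ ≤ 0 := by
  have : Nonempty C := ⟨⟨x, hx⟩⟩
  refine (norm_eq_iInf_iff_real_inner_le_zero hC hx).mp (le_antisymm ?_ ?_)
  · exact le_ciInf fun g => by simpa only [norm_sub_rev u] using hmin g g.2
  · exact ciInf_le ⟨0, fun _ ⟨g, hg⟩ => hg ▸ norm_nonneg (u - g)⟩ (⟨x, hx⟩ : C)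

theorem norm_sub_sq_le_of_real_inner_le {f x u : F} (h : ⟪u, f - x⟫ ≤ ⟪x, f - x⟫) :
    ‖f - x‖ ^ 2 ≤ ‖f‖ ^ 2 - ‖x‖ ^ 2 - 2 * ⟪u, f - x⟫ := by
  have hexpand : ‖f - x‖ ^ 2 = ‖f‖ ^ 2 - ‖x‖ ^ 2 - 2 * ⟪x, f - x⟫ := by
    rw [norm_sub_sq_real, inner_sub_right, real_inner_self_eq_norm_sq, real_inner_comm]
    ring
  linarith

end NearestPoint

theorem Real.le_sqrt_mul_add_div_sqrt_of_mul_sq_le {lam x c ε : ℝ} (hlam : 0 < lam)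
    (hbound : 0 ≤ ε + lam * c) (h : lam * x ^ 2 ≤ (ε + lam * c) ^ 2) :
    x ≤ √lam * c + ε / √lam := by
  have hsqrt : 0 < √lam := Real.sqrt_pos.mpr hlam
  have hscaled : √lam * x ≤ ε + lam * c := by
    refine le_of_sq_le_sq ?_ hbound
    rwa [mul_pow, Real.sq_sqrt hlam.le]
  calc x ≤ (ε + lam * c) / √lam := (le_div_iff₀' hsqrt).mpr hscaled
    _ = √lam * c + ε / √lam := by
      field_simp
      rw [Real.sq_sqrt hlam.le, add_comm, mul_comm]

section Tikhonov

variable {H K : Type*} [NormedAddCommGroup H] [InnerProductSpace ℝ H] [CompleteSpace H]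
  [NormedAddCommGroup K] [InnerProductSpace ℝ K] [CompleteSpace K]

theorem tikhonov_mul_norm_sub_sq_le (A : H →L[ℝ] K) {fplus f : H} {z zeps ζ : K} {ε lam : ℝ}
    (hlam : 0 ≤ lam) (hz : A fplus = z) (hznoise : ‖zeps - z‖ ≤ ε)
    (hvar : ⟪(A†) ζ, f - fplus⟫ ≤ ⟪fplus, f - fplus⟫)
    (hmin : (1 / 2) * ‖A f - zeps‖ ^ 2 + (lam / 2) * ‖f‖ ^ 2 ≤
        (1 / 2) * ‖A fplus - zeps‖ ^ 2 + (lam / 2) * ‖fplus‖ ^ 2) :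
    lam * ‖f - fplus‖ ^ 2 ≤ (ε + lam * ‖ζ‖) ^ 2 := by
  have hsplit : ⟪(A†) ζ, f - fplus⟫ = ⟪ζ, A f - zeps⟫ + ⟪ζ, zeps - z⟫ := by
    rw [ContinuousLinearMap.adjoint_inner_left, ← inner_add_right, map_sub, hz, sub_add_sub_cancel]
  have hdata : ‖A fplus - zeps‖ ≤ ε := by rwa [hz, norm_sub_rev]
  have hfit_inner := abs_le.mp (abs_real_inner_le_norm ζ (A f - zeps))
  have hnoise_inner := abs_le.mp (abs_real_inner_le_norm ζ (zeps - z))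
  have hnoise_le : ‖ζ‖ * ‖zeps - z‖ ≤ ‖ζ‖ * ε := mul_le_mul_of_nonneg_left hznoise (norm_nonneg ζ)
  have hdata_sq : ‖A fplus - zeps‖ ^ 2 ≤ ε ^ 2 := pow_le_pow_left₀ (norm_nonneg _) hdata 2
  nlinarith [mul_le_mul_of_nonneg_left (norm_sub_sq_le_of_real_inner_le hvar) hlam,
    sq_nonneg (‖A f - zeps‖ - lam * ‖ζ‖)]

end Tikhonov

theorem tikhonov_convergence_rate_general
    {H K : Type*} [NormedAddCommGroup H] [InnerProductSpace ℝ H] [CompleteSpace H]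
    [NormedAddCommGroup K] [InnerProductSpace ℝ K] [CompleteSpace K]
    (A : H →L[ℝ] K) (C : Set H)
    (hCconv : Convex ℝ C)
    (fplus : H) (hfplus : fplus ∈ C) (z : K) (hz : A fplus = z)
    (ζ : K) (hsource : ∀ g ∈ C,
      ‖fplus - ContinuousLinearMap.adjoint A ζ‖ ≤ ‖g - ContinuousLinearMap.adjoint A ζ‖)
    (ε : ℝ) (hε : 0 ≤ ε) (zeps : K) (hznoise : ‖zeps - z‖ ≤ ε)
    (lam : ℝ) (hlam : 0 < lam)
    (f : H) (hfC : f ∈ C)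
    (hf : ∀ g ∈ C,
      (1 / 2) * ‖A f - zeps‖ ^ 2 + (lam / 2) * ‖f‖ ^ 2 ≤
        (1 / 2) * ‖A g - zeps‖ ^ 2 + (lam / 2) * ‖g‖ ^ 2) :
    ‖fplus - f‖ ≤ Real.sqrt lam * ‖ζ‖ + ε / Real.sqrt lam := by
  have hvar : ⟪(A†) ζ, f - fplus⟫ ≤ ⟪fplus, f - fplus⟫ := by
    have := real_inner_sub_le_zero_of_forall_norm_sub_le hCconv hfplus hsource f hfC
    rwa [inner_sub_left, sub_nonpos] at this
  have hsq := tikhonov_mul_norm_sub_sq_le A hlam.le hz hznoise hvar (hf fplus hfplus)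
  rw [norm_sub_rev]
  exact Real.le_sqrt_mul_add_div_sqrt_of_mul_sq_le hlam (by positivity) hsq

/-- Convergence rate for constrained Tikhonov regularization under the source condition
`f₊ = Proj_C (A* ζ)`: if `A f₊ = z`, `‖z^ε − z‖ ≤ ε` and `f` minimizes
`J_{lam, z^ε}` over `C`, then `‖f₊ − f‖ ≤ √lam ‖ζ‖ + ε / √lam`. -/
theorem tikhonov_convergence_rate
    {H K : Type*} [NormedAddCommGroup H] [InnerProductSpace ℝ H] [CompleteSpace H]
    [NormedAddCommGroup K] [InnerProductSpace ℝ K] [CompleteSpace K]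
    (A : H →L[ℝ] K) (C : Set H) (hCne : C.Nonempty) (hCcl : IsClosed C)
    (hCconv : Convex ℝ C)
    (fplus : H) (hfplus : fplus ∈ C) (z : K) (hz : A fplus = z)
    (ζ : K) (hsource : ∀ g ∈ C,
      ‖fplus - ContinuousLinearMap.adjoint A ζ‖ ≤ ‖g - ContinuousLinearMap.adjoint A ζ‖)
    (ε : ℝ) (hε : 0 ≤ ε) (zeps : K) (hznoise : ‖zeps - z‖ ≤ ε)
    (lam : ℝ) (hlam : 0 < lam)
    (f : H) (hfC : f ∈ C)
    (hf : ∀ g ∈ C,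
      (1 / 2) * ‖A f - zeps‖ ^ 2 + (lam / 2) * ‖f‖ ^ 2 ≤
        (1 / 2) * ‖A g - zeps‖ ^ 2 + (lam / 2) * ‖g‖ ^ 2) :
    ‖fplus - f‖ ≤ Real.sqrt lam * ‖ζ‖ + ε / Real.sqrt lam :=
  tikhonov_convergence_rate_general A C hCconv fplus hfplus z hz ζ hsource ε hε zeps hznoise lam
    hlam f hfC hf
end
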